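/- arXiv:0902.3304 — 3 statements merged into one kernel-verified Lean document; each statement's English description precedes it below -/
import Mathlib

section
/- Let P be a univariate polynomial of degree d with integer coefficients, each of absolute value less than 2^τ, and suppose P takes only positive values on [0,1]. Then the minimum m of P over [0,1] satisfies m > 3^(d/2) / (2^((2d-1)τ) · (d+1)^(2d-1/2)). -/
/-!
Let `x₀` be a minimiser. If `m < 1`, then `x₀` lies in `(0, 1)`, because `P(0)` and `P(1)` are
positive integers; hence `P'(x₀) = 0` and `m` is a root of `Q(y) = Res_x(P(x) - y, P'(x)) ∈ ℤ[y]`.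
The polynomial `Q` is nonzero (its coefficient of `y^(d-1)` is `±(d · lc P)^d`), and a root in
`(0, 1]` of a nonzero integer polynomial exceeds `1 / ‖Q‖₁`, since its lowest-order term must be
cancelled by the others. Finally `Q` is the determinant of a Sylvester matrix with entries affine
in `y`: expanding it multilinearly and applying Hadamard's inequality bounds `‖Q‖₁` by a product
of column norms, at most `(2^τ √(d+1))^(d-1) (2^τ √((d+1)³/3))^d`, the inverse of the claimed bound.
-/

open Polynomial Set

theorem Matrix.abs_det_le_prod_sqrt_sum_sq {n : Type*} [Fintype n] [DecidableEq n]
    (M : Matrix n n ℝ) : |M.det| ≤ ∏ i, √(∑ j, M i j ^ 2) := by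
  suffices h : ∀ {k : ℕ} (N : Matrix (Fin k) (Fin k) ℝ), |N.det| ≤ ∏ i, √(∑ j, N i j ^ 2) by
    let e := Fintype.equivFin n
    have := h (M.reindex e e)
    rw [det_reindex_self] at this
    refine this.trans_eq ?_
    rw [← e.symm.prod_comp]
    simp [← e.symm.sum_comp]
  intro k N
  have : Fact (Module.finrank ℝ (EuclideanSpace ℝ (Fin k)) = k) := ⟨finrank_euclideanSpace_fin⟩
  let b := EuclideanSpace.basisFun (Fin k) ℝ
  let v : Fin k → EuclideanSpace ℝ (Fin k) := fun i ↦ WithLp.toLp 2 (N i)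
  have hdet : b.toBasis.det v = N.det := by
    rw [Module.Basis.det_apply, ← N.det_transpose]
    rfl
  have := b.toBasis.orientation.abs_volumeForm_apply_le v
  rw [b.toBasis.orientation.volumeForm_robust' b, hdet] at this
  simpa [v, EuclideanSpace.norm_eq] using this

theorem sum_range_add_one_sq_le (d : ℕ) :
    ∑ k ∈ Finset.range d, ((k : ℝ) + 1) ^ 2 ≤ ((d : ℝ) + 1) ^ 3 / 3 := by
  induction d with
  | zero => norm_num
  | succ d ih =>
    rw [Finset.sum_range_succ]
    push_cast
    nlinarith [(d.cast_nonneg : (0 : ℝ) ≤ d)]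

theorem pow_mul_sqrt_pow_eq_rpow {d : ℕ} (hd : 1 ≤ d) (B a : ℝ) (ha : 0 < a) :
    (B * √a) ^ (d - 1) * (B * √(a ^ 3 / 3)) ^ d =
      B ^ (2 * d - 1) * a ^ (2 * (d : ℝ) - 1 / 2) / 3 ^ ((d : ℝ) / 2) := by
  have hsqrt : √a ^ (d - 1) * √(a ^ 3 / 3) ^ d =
      a ^ (2 * (d : ℝ) - 1 / 2) / 3 ^ ((d : ℝ) / 2) := by
    rw [Real.sqrt_eq_rpow, Real.sqrt_eq_rpow, ← Real.rpow_natCast, ← Real.rpow_natCast,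
      ← Real.rpow_mul ha.le, ← Real.rpow_mul (by positivity),
      Real.div_rpow (by positivity) (by norm_num), ← Real.rpow_natCast a 3, ← Real.rpow_mul ha.le,
      ← mul_div_assoc, ← Real.rpow_add ha]
    congr 2
    · push_cast [Nat.cast_sub hd]
      ring
    · ring
  rw [mul_pow, mul_pow, mul_mul_mul_comm, ← pow_add, hsqrt, mul_div_assoc]
  congr 2
  omega

theorem one_lt_mul_sqrt_pow_mul_mul_sqrt_pow {d : ℕ} (hd : 1 ≤ d) {B : ℝ} (hB : 1 ≤ B) :
    1 < (B * √(d + 1)) ^ (d - 1) * (B * √((d + 1) ^ 3 / 3)) ^ d := by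
  have hs1 : (1 : ℝ) ≤ √(d + 1) := Real.one_le_sqrt.mpr (by simp)
  have hs3 : (1 : ℝ) < √((d + 1) ^ 3 / 3) := by
    rw [Real.lt_sqrt zero_le_one]
    have : (2 : ℝ) ≤ d + 1 := by exact_mod_cast Nat.succ_le_succ hd
    nlinarith [pow_le_pow_left₀ zero_le_two this 3]
  exact one_lt_mul_of_le_of_lt (one_le_pow₀ (one_le_mul_of_one_le_of_one_le hB hs1))
    (one_lt_pow₀ (one_lt_mul_of_le_of_lt hB hs3) (by omega))

namespace Polynomial

variable {R : Type*}

noncomputable def l1Norm [SeminormedRing R] (p : R[X]) : ℝ := p.sum fun _ a ↦ ‖a‖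

noncomputable def l2Norm [SeminormedRing R] (p : R[X]) : ℝ := √(p.sum fun _ a ↦ ‖a‖ ^ 2)

section SeminormedRing

variable [SeminormedRing R]

theorem l1Norm_eq_sum_range {p : R[X]} {n : ℕ} (hn : p.natDegree < n) :
    p.l1Norm = ∑ i ∈ Finset.range n, ‖p.coeff i‖ :=
  p.sum_over_range' (fun _ ↦ norm_zero) n hn

theorem l1Norm_map {S : Type*} [SeminormedRing S] (φ : R →+* S) (hφ : ∀ a, ‖φ a‖ = ‖a‖)
    (p : R[X]) : (p.map φ).l1Norm = p.l1Norm := by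
  rw [l1Norm_eq_sum_range (Nat.lt_succ_of_le natDegree_map_le),
    l1Norm_eq_sum_range (Nat.lt_succ_self _)]
  simp [hφ]

theorem l1Norm_add_le (p q : R[X]) : (p + q).l1Norm ≤ p.l1Norm + q.l1Norm := by
  set n := max p.natDegree q.natDegree + 1
  rw [l1Norm_eq_sum_range (p := p) (n := n) (by omega),
    l1Norm_eq_sum_range (p := q) (n := n) (by omega),
    l1Norm_eq_sum_range (n := n) (Nat.lt_succ_of_le (natDegree_add_le p q)),
    ← Finset.sum_add_distrib]
  exact Finset.sum_le_sum fun i _ ↦ by simpa only [coeff_add] using norm_add_le _ _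

theorem l1Norm_sum_le {ι : Type*} (s : Finset ι) (p : ι → R[X]) :
    (∑ i ∈ s, p i).l1Norm ≤ ∑ i ∈ s, (p i).l1Norm :=
  Finset.le_sum_of_subadditive l1Norm (by simp [l1Norm]) l1Norm_add_le s p

theorem l1Norm_X_pow_mul_C (k : ℕ) (a : R) : (X ^ k * C a).l1Norm = ‖a‖ := by
  rw [X_pow_mul_C, C_mul_X_pow_eq_monomial, l1Norm, sum_monomial_index _ _ norm_zero]

theorem l2Norm_nonneg (p : R[X]) : 0 ≤ p.l2Norm := Real.sqrt_nonneg _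

theorem l2Norm_C (a : R) : (C a).l2Norm = ‖a‖ := by
  rw [l2Norm, sum_C_index (by simp), Real.sqrt_sq (norm_nonneg a)]

theorem l2Norm_sq_eq_sum_range {p : R[X]} {n : ℕ} (hn : p.natDegree < n) :
    p.l2Norm ^ 2 = ∑ i ∈ Finset.range n, ‖p.coeff i‖ ^ 2 := by
  rw [l2Norm, p.sum_over_range' (by simp) n hn,
    Real.sq_sqrt (Finset.sum_nonneg fun _ _ ↦ by positivity)]

end SeminormedRing

theorem l2Norm_le_of_abs_coeff_le {p : ℝ[X]} {H : ℝ} (hH : ∀ i, |p.coeff i| ≤ H) :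
    p.l2Norm ≤ H * √(p.natDegree + 1) := by
  have hH0 : 0 ≤ H := (abs_nonneg _).trans (hH 0)
  rw [← Real.sqrt_sq hH0, ← Real.sqrt_mul (sq_nonneg H)]
  refine Real.le_sqrt_of_sq_le ?_
  rw [l2Norm_sq_eq_sum_range (Nat.lt_succ_self _)]
  calc ∑ i ∈ Finset.range (p.natDegree + 1), ‖p.coeff i‖ ^ 2
      ≤ ∑ i ∈ Finset.range (p.natDegree + 1), H ^ 2 :=
        Finset.sum_le_sum fun i _ ↦ pow_le_pow_left₀ (norm_nonneg _) (hH i) 2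
    _ = H ^ 2 * (p.natDegree + 1) := by simp [mul_comm]

theorem l2Norm_derivative_le_of_abs_coeff_le {p : ℝ[X]} {H : ℝ} (hH : ∀ i, |p.coeff i| ≤ H) :
    (derivative p).l2Norm ≤ H * √((p.natDegree + 1) ^ 3 / 3) := by
  set d := p.natDegree
  have hH0 : 0 ≤ H := (abs_nonneg _).trans (hH 0)
  rw [← Real.sqrt_sq hH0, ← Real.sqrt_mul (sq_nonneg H)]
  refine Real.le_sqrt_of_sq_le ?_
  have hdeg : (derivative p).natDegree < d + 1 := (natDegree_derivative_le p).trans_lt (by omega)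
  rw [l2Norm_sq_eq_sum_range hdeg, Finset.sum_range_succ, coeff_derivative,
    coeff_eq_zero_of_natDegree_lt (Nat.lt_succ_self d), zero_mul, norm_zero,
    zero_pow two_ne_zero, add_zero]
  calc ∑ k ∈ Finset.range d, ‖(derivative p).coeff k‖ ^ 2
      ≤ ∑ k ∈ Finset.range d, H ^ 2 * ((k : ℝ) + 1) ^ 2 := by
        refine Finset.sum_le_sum fun k _ ↦ ?_
        rw [coeff_derivative, norm_mul, mul_pow,
          Real.norm_of_nonneg (by positivity : (0 : ℝ) ≤ k + 1)]
        exact mul_le_mul_of_nonneg_right (pow_le_pow_left₀ (norm_nonneg _) (hH (k + 1)) 2)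
          (by positivity)
    _ ≤ H ^ 2 * (((d : ℝ) + 1) ^ 3 / 3) := by
        rw [← Finset.mul_sum]
        exact mul_le_mul_of_nonneg_left (sum_range_add_one_sq_le d) (sq_nonneg H)

open Matrix in
theorem l1Norm_det_X_smul_add_le {n : Type*} [Fintype n] [DecidableEq n] (A B : Matrix n n ℝ) :
    (det ((X : ℝ[X]) • A.map C + B.map C)).l1Norm ≤
      ∏ i, (√(∑ j, A i j ^ 2) + √(∑ j, B i j ^ 2)) := by
  let mix (s : Finset n) : Matrix n n ℝ := of fun i ↦ if i ∈ s then A i else B i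
  have hexp : det ((X : ℝ[X]) • A.map C + B.map C) =
      ∑ s : Finset n, X ^ s.card * C (mix s).det := by
    refine (detRowAlternating.map_add_univ (R := ℝ[X])
      (fun i ↦ ((X : ℝ[X]) • A.map C : Matrix n n ℝ[X]) i)
      (fun i ↦ (B.map C : Matrix n n ℝ[X]) i)).trans (Finset.sum_congr rfl fun s _ ↦ ?_)
    have hrows : s.piecewise (fun i ↦ ((X : ℝ[X]) • A.map C : Matrix n n ℝ[X]) i)
        (fun i ↦ (B.map C : Matrix n n ℝ[X]) i) =
        fun i ↦ (if i ∈ s then (X : ℝ[X]) else 1) • (mix s).map C i := by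
      ext i j
      by_cases hi : i ∈ s <;> simp [hi, mix]
    rw [hrows]
    refine (detRowAlternating.map_smul_univ (fun i ↦ if i ∈ s then (X : ℝ[X]) else 1)
      (fun i ↦ ((mix s).map C : Matrix n n ℝ[X]) i)).trans ?_
    rw [Finset.prod_ite_mem, Finset.univ_inter, Finset.prod_const, smul_eq_mul, RingHom.map_det]
    rfl
  calc (det ((X : ℝ[X]) • A.map C + B.map C)).l1Norm
      ≤ ∑ s : Finset n, |(mix s).det| := by
        rw [hexp]
        refine (l1Norm_sum_le _ _).trans_eq (Finset.sum_congr rfl fun s _ ↦ ?_)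
        rw [l1Norm_X_pow_mul_C, Real.norm_eq_abs]
    _ ≤ ∑ s : Finset n,
          ∏ i, s.piecewise (fun i ↦ √(∑ j, A i j ^ 2)) (fun i ↦ √(∑ j, B i j ^ 2)) i := by
        refine Finset.sum_le_sum fun s _ ↦ (abs_det_le_prod_sqrt_sum_sq _).trans_eq ?_
        refine Finset.prod_congr rfl fun i _ ↦ ?_
        by_cases hi : i ∈ s <;> simp [hi, mix]
    _ = ∏ i, (√(∑ j, A i j ^ 2) + √(∑ j, B i j ^ 2)) := by
        rw [Finset.prod_add, Finset.powerset_univ]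
        refine Finset.sum_congr rfl fun s _ ↦ ?_
        rw [Finset.prod_piecewise, Finset.univ_inter]

theorem one_lt_mul_l1Norm_of_aeval_eq_zero {Q : ℤ[X]} (hQ : Q ≠ 0) {x : ℝ} (hx0 : 0 < x)
    (hx1 : x ≤ 1) (hroot : aeval x Q = 0) : 1 < x * Q.l1Norm := by
  set j := Q.natTrailingDegree
  have hj : j ∈ Q.support := natTrailingDegree_mem_support_of_nonzero hQ
  have hc : (1 : ℝ) ≤ |(Q.coeff j : ℝ)| := by
    exact_mod_cast Int.one_le_abs (mem_support_iff.mp hj)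
  have hlt : ∀ k ∈ Q.support.erase j, j + 1 ≤ k := fun k hk ↦
    lt_of_le_of_ne (natTrailingDegree_le_of_mem_supp k (Finset.mem_of_mem_erase hk))
      (Finset.ne_of_mem_erase hk).symm
  set rest := ∑ k ∈ Q.support.erase j, |(Q.coeff k : ℝ)|
  have hl1 : Q.l1Norm = |(Q.coeff j : ℝ)| + rest := by
    rw [l1Norm, Polynomial.sum_def, ← Finset.add_sum_erase _ _ hj]
    simp [rest, Int.norm_eq_abs]
  have hsplit : (Q.coeff j : ℝ) * x ^ j = -∑ k ∈ Q.support.erase j, (Q.coeff k : ℝ) * x ^ k := by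
    rw [aeval_def, eval₂_eq_sum, Polynomial.sum_def, ← Finset.add_sum_erase _ _ hj] at hroot
    simp only [algebraMap_int_eq, eq_intCast] at hroot
    linarith
  have key : x ^ j ≤ x ^ (j + 1) * rest := calc
    x ^ j ≤ |(Q.coeff j : ℝ)| * x ^ j := le_mul_of_one_le_left (by positivity) hc
    _ = |∑ k ∈ Q.support.erase j, (Q.coeff k : ℝ) * x ^ k| := by
      rw [← abs_of_pos (pow_pos hx0 j), ← abs_mul, hsplit, abs_neg]
    _ ≤ ∑ k ∈ Q.support.erase j, |(Q.coeff k : ℝ)| * x ^ (j + 1) := by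
      refine (Finset.abs_sum_le_sum_abs _ _).trans (Finset.sum_le_sum fun k hk ↦ ?_)
      rw [abs_mul, abs_of_pos (pow_pos hx0 k)]
      exact mul_le_mul_of_nonneg_left (pow_le_pow_of_le_one hx0.le hx1 (hlt k hk)) (abs_nonneg _)
    _ = x ^ (j + 1) * rest := by rw [← Finset.sum_mul, mul_comm]
  have hrest : 1 ≤ x * rest := by
    rw [pow_succ, mul_assoc] at key
    exact (le_mul_iff_one_le_right (pow_pos hx0 j)).mp key
  rw [hl1]
  nlinarith

theorem sum_sq_shifted_coeff_le (p : ℝ[X]) (N j n : ℕ) :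
    ∑ i : Fin N, (if (i : ℕ) ∈ Icc j (j + n) then p.coeff (i - j) else 0) ^ 2 ≤ p.l2Norm ^ 2 := by
  calc ∑ i : Fin N, (if (i : ℕ) ∈ Icc j (j + n) then p.coeff (i - j) else 0) ^ 2
      = ∑ i ∈ (Finset.range N).filter (· ∈ Icc j (j + n)), p.coeff (i - j) ^ 2 := by
        rw [Finset.sum_filter, ← Fin.sum_univ_eq_sum_range
          (fun i ↦ if i ∈ Icc j (j + n) then p.coeff (i - j) ^ 2 else 0)]
        simp only [ite_pow, ne_eq, OfNat.ofNat_ne_zero, not_false_eq_true, zero_pow]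
    _ ≤ ∑ i ∈ Finset.Ico j (j + (n + 1)), p.coeff (i - j) ^ 2 := by
        refine Finset.sum_le_sum_of_subset_of_nonneg (fun i hi ↦ ?_) fun _ _ _ ↦ sq_nonneg _
        simp only [Finset.mem_filter, mem_Icc] at hi
        simp only [Finset.mem_Ico]
        omega
    _ = ∑ k ∈ Finset.range (n + 1), p.coeff k ^ 2 := by
        rw [Finset.sum_Ico_eq_sum_range]
        simp
    _ ≤ ∑ k ∈ Finset.range (max n p.natDegree + 1), p.coeff k ^ 2 :=
        Finset.sum_le_sum_of_subset_of_nonneg (Finset.range_subset_range.mpr (by omega))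
          fun _ _ _ ↦ sq_nonneg _
    _ = p.l2Norm ^ 2 := by
        rw [l2Norm_sq_eq_sum_range (n := max n p.natDegree + 1) (by omega)]
        simp [Real.norm_eq_abs, sq_abs]

theorem sqrt_sum_sq_sylvester_castAdd_le (f g : ℝ[X]) (m n : ℕ) (j : Fin m) :
    √(∑ i, sylvester f g m n i (Fin.castAdd n j) ^ 2) ≤ g.l2Norm :=
  Real.sqrt_le_iff.mpr ⟨l2Norm_nonneg g, by
    simpa [sylvester] using sum_sq_shifted_coeff_le g (m + n) j n⟩

theorem sqrt_sum_sq_sylvester_natAdd_le (f g : ℝ[X]) (m n : ℕ) (j : Fin n) :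
    √(∑ i, sylvester f g m n i (Fin.natAdd m j) ^ 2) ≤ f.l2Norm :=
  Real.sqrt_le_iff.mpr ⟨l2Norm_nonneg f, by
    simpa [sylvester] using sum_sq_shifted_coeff_le f (m + n) j m⟩

section CommRing

variable [CommRing R]

theorem sylvester_map_C_add_C_X_mul (f₀ f₁ g₀ g₁ : R[X]) (m n : ℕ) :
    sylvester (f₀.map C + C X * f₁.map C) (g₀.map C + C X * g₁.map C) m n =
      (X : R[X]) • (sylvester f₁ g₁ m n).map C + (sylvester f₀ g₀ m n).map C := by
  ext i j
  induction j using Fin.addCases <;> simp [sylvester, coeff_C_mul] <;> split_ifs <;>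
    simp [add_comm]

theorem resultant_eq_zero_of_isRoot {f g : R[X]} {m n : ℕ} (hf : f.natDegree ≤ m)
    (hg : g.natDegree ≤ n) (hmn : m ≠ 0 ∨ n ≠ 0) {x : R} (hfx : f.IsRoot x) (hgx : g.IsRoot x) :
    resultant f g m n = 0 := by
  obtain ⟨p, q, -, -, h⟩ := exists_mul_add_mul_eq_C_resultant f g hf hg hmn
  simpa [hfx.eq_zero, hgx.eq_zero] using congr_arg (eval x) h.symm

/-- `Res_x(P(x) - y, P'(x))`, where `y` is the variable of the coefficient ring `R[X]`. -/
noncomputable def criticalValuePoly (P : R[X]) : R[X] :=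
  resultant (P.map C - C X) ((derivative P).map C) P.natDegree (P.natDegree - 1)

theorem aeval_criticalValuePoly_eq_zero {S : Type*} [CommRing S] [Algebra R S] {P : R[X]}
    (hP : P.natDegree ≠ 0) {x : S} (hx : aeval x (derivative P) = 0) :
    aeval (aeval x P) (criticalValuePoly P) = 0 := by
  set φ : R[X] →+* S := (aeval (aeval x P)).toRingHom
  have hφC : φ.comp C = algebraMap R S := by ext; simp [φ]
  change φ (resultant _ _ _ _) = 0
  rw [← resultant_map_map]
  refine resultant_eq_zero_of_isRoot ?_ ?_ (Or.inl hP) (x := x) ?_ ?_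
  · simp only [Polynomial.map_sub, Polynomial.map_map, hφC, map_C]
    exact (natDegree_sub_le _ _).trans (max_le natDegree_map_le (by simp))
  · rw [Polynomial.map_map, hφC]
    exact natDegree_map_le.trans (natDegree_derivative_le P)
  · rw [IsRoot, Polynomial.map_sub, Polynomial.map_map, hφC, eval_sub, eval_map_algebraMap,
      map_C, eval_C]
    simp [φ]
  · simpa [IsRoot, Polynomial.map_map, hφC, eval_map_algebraMap] using hx

theorem criticalValuePoly_ne_zero [IsDomain R] [CharZero R] {P : R[X]} (hP : P.natDegree ≠ 0) :
    criticalValuePoly P ≠ 0 := by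
  set d := P.natDegree
  -- Multiplying `P'` by `y` puts `y` into every column of the Sylvester matrix, so that the
  -- top coefficient of the determinant is the determinant of the `y`-part.
  have hpencil : X ^ d * criticalValuePoly P = Matrix.det ((X : R[X]) •
      (sylvester (-1) (derivative P) d (d - 1)).map C + (sylvester P 0 d (d - 1)).map C) := by
    rw [criticalValuePoly, ← resultant_C_mul_right, resultant, ← sylvester_map_C_add_C_X_mul]
    congr 2
    · rw [Polynomial.map_neg, Polynomial.map_one]
      ring
    · rw [Polynomial.map_zero, zero_add]
  have htop : (X ^ d * criticalValuePoly P).coeff (d + (d - 1)) ≠ 0 := by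
    have := coeff_det_X_add_C_card (sylvester (-1) (derivative P) d (d - 1))
      (sylvester P 0 d (d - 1))
    rw [Fintype.card_fin, ← hpencil] at this
    have hP0 : P ≠ 0 := by rintro rfl; simp [d] at hP
    rw [this, ← C_1, ← C_neg, ← resultant, resultant_C_left, coeff_derivative,
      Nat.sub_add_cancel (Nat.pos_of_ne_zero hP)]
    simp [hP0, d, Nat.cast_add_one_ne_zero]
  intro h
  simp [h] at htop

theorem criticalValuePoly_map {S : Type*} [CommRing S] (φ : R →+* S) (hφ : Function.Injective φ)
    (P : R[X]) : criticalValuePoly (P.map φ) = (criticalValuePoly P).map φ := by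
  rw [criticalValuePoly, criticalValuePoly, natDegree_map_eq_of_injective hφ]
  change _ = mapRingHom φ (resultant _ _ _ _)
  rw [← resultant_map_map]
  congr 1 <;> simp [Polynomial.map_map, derivative_map, mapRingHom_comp_C]

end CommRing

open Matrix in
theorem l1Norm_criticalValuePoly_le (P : ℝ[X]) :
    (criticalValuePoly P).l1Norm ≤
      (P.l2Norm + 1) ^ (P.natDegree - 1) * (derivative P).l2Norm ^ P.natDegree := by
  set d := P.natDegree
  have hf : P.map C - C X = P.map C + C X * (-1 : ℝ[X]).map C := by
    rw [Polynomial.map_neg, Polynomial.map_one]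
    ring
  have hg : (derivative P).map C = (derivative P).map C + C X * (0 : ℝ[X]).map C := by
    rw [Polynomial.map_zero, mul_zero, add_zero]
  rw [criticalValuePoly, resultant, hf, hg, sylvester_map_C_add_C_X_mul, ← det_transpose,
    transpose_add, transpose_smul, ← transpose_map, ← transpose_map]
  refine (l1Norm_det_X_smul_add_le _ _).trans ?_
  simp only [transpose_apply]
  rw [Fin.prod_univ_add, mul_comm]
  have hneg : (-1 : ℝ[X]).l2Norm = 1 := by rw [← C_1, ← C_neg, l2Norm_C, norm_neg, norm_one]
  have hzero : (0 : ℝ[X]).l2Norm = 0 := by rw [← C_0, l2Norm_C, norm_zero]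
  refine mul_le_mul ?_ ?_ (by positivity) (pow_nonneg (by linarith [l2Norm_nonneg P]) _)
  · calc _ ≤ ∏ _i : Fin (d - 1), (1 + P.l2Norm) :=
          Finset.prod_le_prod (fun _ _ ↦ by positivity) fun j _ ↦ add_le_add
            ((sqrt_sum_sq_sylvester_natAdd_le _ _ _ _ j).trans_eq hneg)
            (sqrt_sum_sq_sylvester_natAdd_le _ _ _ _ j)
      _ = (P.l2Norm + 1) ^ (d - 1) := by
          rw [Finset.prod_const, Finset.card_univ, Fintype.card_fin, add_comm]
  · calc _ ≤ ∏ _i : Fin d, (derivative P).l2Norm :=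
          Finset.prod_le_prod (fun _ _ ↦ by positivity) fun j _ ↦
            (add_le_add ((sqrt_sum_sq_sylvester_castAdd_le _ _ _ _ j).trans_eq hzero)
              (sqrt_sum_sq_sylvester_castAdd_le _ _ _ _ j)).trans_eq (zero_add _)
      _ = (derivative P).l2Norm ^ d := by
          rw [Finset.prod_const, Finset.card_univ, Fintype.card_fin]

theorem l1Norm_criticalValuePoly_le_of_abs_coeff_lt (P : ℤ[X]) {B : ℤ}
    (hB : ∀ i, |P.coeff i| < B) :
    (criticalValuePoly P).l1Norm ≤ (B * √(P.natDegree + 1)) ^ (P.natDegree - 1) *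
      (B * √((P.natDegree + 1) ^ 3 / 3)) ^ P.natDegree := by
  set Pr := P.map (Int.castRingHom ℝ)
  have hdeg : Pr.natDegree = P.natDegree := natDegree_map_eq_of_injective Int.cast_injective P
  have hH : ∀ i, |Pr.coeff i| ≤ B - 1 := fun i ↦ by
    rw [coeff_map, eq_intCast, ← Int.cast_abs]
    exact_mod_cast Int.le_sub_one_of_lt (hB i)
  have hB1 : (1 : ℝ) ≤ B := by exact_mod_cast (abs_nonneg _).trans_lt (hB 0)
  have hsqrt : (1 : ℝ) ≤ √(P.natDegree + 1) := Real.one_le_sqrt.mpr (by simp)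
  have hP := l2Norm_le_of_abs_coeff_le hH
  have hP' := l2Norm_derivative_le_of_abs_coeff_le hH
  rw [hdeg] at hP hP'
  rw [← l1Norm_map (Int.castRingHom ℝ) Int.norm_cast_real,
    ← criticalValuePoly_map _ Int.cast_injective]
  refine (l1Norm_criticalValuePoly_le Pr).trans ?_
  rw [hdeg]
  refine mul_le_mul (pow_le_pow_left₀ (by linarith [l2Norm_nonneg Pr]) (by nlinarith) _)
    (pow_le_pow_left₀ (l2Norm_nonneg _) (hP'.trans ?_) _) (pow_nonneg (l2Norm_nonneg _) _)
    (by positivity)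
  exact mul_le_mul_of_nonneg_right (by linarith) (Real.sqrt_nonneg _)

theorem one_le_aeval_intCast_of_pos (P : ℤ[X]) (n : ℤ) (h : 0 < aeval (n : ℝ) P) :
    1 ≤ aeval (n : ℝ) P := by
  have heval : aeval (n : ℝ) P = ((P.eval n : ℤ) : ℝ) := by
    simpa using aeval_algebraMap_apply_eq_algebraMap_eval (A := ℝ) n P
  rw [heval] at h ⊢
  exact_mod_cast Int.cast_pos.mp h

theorem aeval_derivative_eq_zero_of_isMinOn_Icc {P : ℤ[X]} {x₀ : ℝ} (hx₀ : x₀ ∈ Icc 0 1)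
    (hmin : IsMinOn (fun x ↦ aeval x P) (Icc 0 1) x₀) (hpos : 0 < aeval x₀ P)
    (hlt : aeval x₀ P < 1) : aeval x₀ (derivative P) = 0 := by
  have h0 := one_le_aeval_intCast_of_pos P 0
  have h1 := one_le_aeval_intCast_of_pos P 1
  push_cast at h0 h1
  have hx₀' : x₀ ∈ Ioo 0 1 :=
    ⟨hx₀.1.lt_of_ne (by rintro rfl; linarith [h0 hpos]),
      hx₀.2.lt_of_ne (by rintro rfl; linarith [h1 hpos])⟩
  rw [← Polynomial.deriv_aeval]
  exact (hmin.isLocalMin (Icc_mem_nhds hx₀'.1 hx₀'.2)).deriv_eq_zero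

end Polynomial

theorem univariate_min_bound (P : Polynomial ℤ) (d τ : ℕ) (hd : 1 ≤ d)
    (hdeg : P.natDegree = d)
    (hτ : ∀ i, |P.coeff i| ≤ 2 ^ τ - 1)
    (hpos : ∀ x ∈ Icc (0:ℝ) 1, 0 < Polynomial.aeval x P)
    (m : ℝ) (hm : IsLeast ((fun x : ℝ => Polynomial.aeval x P) '' Icc (0:ℝ) 1) m) :
    (3:ℝ) ^ ((d:ℝ)/2) / (2 ^ ((2*d - 1) * τ) * ((d:ℝ)+1) ^ (2*(d:ℝ) - 1/2)) < m := by
  rw [pow_mul', ← inv_div, ← pow_mul_sqrt_pow_eq_rpow hd _ _ (by positivity : (0 : ℝ) < d + 1)]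
  have hK := one_lt_mul_sqrt_pow_mul_mul_sqrt_pow hd (one_le_pow₀ one_le_two : (1 : ℝ) ≤ 2 ^ τ)
  obtain ⟨⟨x₀, hx₀, rfl⟩, hmin⟩ := hm
  rcases le_or_gt 1 (aeval x₀ P) with hm1 | hm1
  · exact (inv_lt_one_of_one_lt₀ hK).trans_le hm1
  have hder := aeval_derivative_eq_zero_of_isMinOn_Icc hx₀ (fun y hy ↦ hmin ⟨y, hy, rfl⟩)
    (hpos x₀ hx₀) hm1
  have hroot := one_lt_mul_l1Norm_of_aeval_eq_zero (criticalValuePoly_ne_zero (by omega))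
    (hpos x₀ hx₀) hm1.le (aeval_criticalValuePoly_eq_zero (by omega) hder)
  have hbound := l1Norm_criticalValuePoly_le_of_abs_coeff_lt P (B := 2 ^ τ)
    fun i ↦ by linarith [hτ i]
  push_cast [hdeg] at hbound
  rw [inv_lt_iff_one_lt_mul₀ (by positivity)]
  exact hroot.trans_le (mul_le_mul_of_nonneg_left hbound (hpos x₀ hx₀).le)
end

section
/- Suppose a polynomial R(Z) with real coefficients satisfies R(m) = 0 for some m > 0, has degree at most d_u, and each coefficient r_i satisfies |r_i| < C(d_u, i) · A^(d_u) · B^(d_{P,u}) where A = 2^(τ_{P,u}) √(d_{P,u}+1) and B = 2^(τ_u) √(d_u+1), and moreover the lowest nonzero coefficient is a nonzero integer. Then m > 1 / ((2A)^(d_u) · B^(d_{P,u})) = 1 / ((2^(τ_{P,u}+1) √(d_{P,u}+1))^(d_u) · (2^(τ_u) √(d_u+1))^(d_{P,u})). -/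
/-!
Let `k` be the trailing degree of `R`. At a root `m < 1`, the term `r_k m^k` is cancelled by the
higher terms, each of which is at most `|r_i| m^(k+1)`, so `|r_k| ≤ m · Σ |r_i|`; for `m ≥ 1` this
holds trivially. Integrality gives `|r_k| ≥ 1`, and the coefficient bounds with `Σ_i C(d_u, i) = 2^(d_u)`
give `Σ |r_i| < 2^(d_u) A^(d_u) B^(d_{P,u})`.
-/

open Polynomial Finset

theorem abs_trailingCoeff_le_mul_sum_abs_coeff {p : ℝ[X]} {m : ℝ} (hm : 0 < m) (hm1 : m ≤ 1)
    (hroot : p.eval m = 0) :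
    |p.trailingCoeff| ≤ m * ∑ i ∈ p.support, |p.coeff i| := by
  by_cases hp : p = 0
  · simp [hp]
  set k := p.natTrailingDegree
  have hk : k ∈ p.support := natTrailingDegree_mem_support_of_nonzero hp
  have hsplit : p.trailingCoeff * m ^ k = -∑ i ∈ p.support.erase k, p.coeff i * m ^ i := by
    rw [eval_eq_sum, sum_def, ← add_sum_erase _ _ hk] at hroot
    exact eq_neg_of_add_eq_zero_left hroot
  have hpow : ∀ i ∈ p.support.erase k, m ^ i ≤ m ^ k * m := fun i hi => by
    have hki : k < i := lt_of_le_of_ne (natTrailingDegree_le_of_mem_supp i (mem_of_mem_erase hi))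
      (ne_of_mem_erase hi).symm
    rw [← pow_succ]
    exact pow_le_pow_of_le_one hm.le hm1 hki
  have key : m ^ k * |p.trailingCoeff| ≤ m ^ k * (m * ∑ i ∈ p.support, |p.coeff i|) :=
    calc m ^ k * |p.trailingCoeff| = |∑ i ∈ p.support.erase k, p.coeff i * m ^ i| := by
          rw [← abs_neg (∑ i ∈ _, _), ← hsplit, abs_mul, abs_of_pos (pow_pos hm k), mul_comm]
      _ ≤ ∑ i ∈ p.support.erase k, |p.coeff i| * (m ^ k * m) := by
          refine (abs_sum_le_sum_abs _ _).trans (sum_le_sum fun i hi => ?_)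
          rw [abs_mul, abs_of_pos (pow_pos hm i)]
          exact mul_le_mul_of_nonneg_left (hpow i hi) (abs_nonneg _)
      _ ≤ ∑ i ∈ p.support, |p.coeff i| * (m ^ k * m) :=
          sum_le_sum_of_subset_of_nonneg (erase_subset _ _) fun i _ _ => by positivity
      _ = m ^ k * (m * ∑ i ∈ p.support, |p.coeff i|) := by rw [← sum_mul]; ring
  exact le_of_mul_le_mul_left key (pow_pos hm k)

theorem one_le_mul_sum_abs_coeff_of_eval_eq_zero {p : ℝ[X]} {m : ℝ} (hm : 0 < m)
    (hroot : p.eval m = 0) (htrail : 1 ≤ |p.trailingCoeff|) :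
    1 ≤ m * ∑ i ∈ p.support, |p.coeff i| := by
  rcases le_or_gt m 1 with hm1 | hm1
  · exact htrail.trans (abs_trailingCoeff_le_mul_sum_abs_coeff hm hm1 hroot)
  · have hp : p ≠ 0 := by rintro rfl; norm_num at htrail
    have hle : |p.trailingCoeff| ≤ ∑ i ∈ p.support, |p.coeff i| :=
      single_le_sum (f := fun i => |p.coeff i|) (fun i _ => abs_nonneg _)
        (natTrailingDegree_mem_support_of_nonzero hp)
    nlinarith

theorem sum_abs_coeff_lt_two_pow_mul {p : ℝ[X]} {d : ℕ} {K : ℝ} (hdeg : p.natDegree ≤ d)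
    (hcoeff : ∀ i ≤ d, |p.coeff i| < d.choose i * K) :
    ∑ i ∈ p.support, |p.coeff i| < 2 ^ d * K :=
  calc ∑ i ∈ p.support, |p.coeff i| ≤ ∑ i ∈ range (d + 1), |p.coeff i| :=
        sum_le_sum_of_subset_of_nonneg
          (p.supp_subset_range_natDegree_succ.trans (range_subset_range.2 (by omega)))
          fun i _ _ => abs_nonneg _
    _ < ∑ i ∈ range (d + 1), (d.choose i : ℝ) * K :=
        sum_lt_sum_of_nonempty nonempty_range_add_one fun i hi =>
          hcoeff i (Nat.lt_succ_iff.1 (mem_range.1 hi))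
    _ = 2 ^ d * K := by rw [← sum_mul, ← Nat.cast_sum, Nat.sum_range_choose]; push_cast; rfl

theorem min_lower_bound_from_resultant (R : Polynomial ℝ) (du dpu τu τpu : ℕ)
    (m : ℝ) (hm : 0 < m) (hroot : R.eval m = 0) (hR : R ≠ 0)
    (hdeg : R.natDegree ≤ du)
    (hint : ∀ i, ∃ z : ℤ, R.coeff i = z)
    (hcoeff : ∀ i ≤ du, |R.coeff i| <
      (du.choose i) * ((2:ℝ) ^ τpu * Real.sqrt ((dpu : ℝ) + 1)) ^ du *
        ((2:ℝ) ^ τu * Real.sqrt ((du : ℝ) + 1)) ^ dpu) :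
    1 / (((2:ℝ) ^ (τpu + 1) * Real.sqrt ((dpu : ℝ) + 1)) ^ du *
      ((2:ℝ) ^ τu * Real.sqrt ((du : ℝ) + 1)) ^ dpu) < m := by
  set A : ℝ := 2 ^ τpu * Real.sqrt ((dpu : ℝ) + 1)
  set B : ℝ := 2 ^ τu * Real.sqrt ((du : ℝ) + 1)
  have htrail : 1 ≤ |R.trailingCoeff| := by
    obtain ⟨z, hz⟩ := hint R.natTrailingDegree
    have hz0 : z ≠ 0 := by
      rintro rfl
      exact trailingCoeff_nonzero_iff_nonzero.2 hR (by simpa using hz)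
    rw [trailingCoeff, hz]
    exact_mod_cast Int.one_le_abs hz0
  have hlower := one_le_mul_sum_abs_coeff_of_eval_eq_zero hm hroot htrail
  have hupper := sum_abs_coeff_lt_two_pow_mul (K := A ^ du * B ^ dpu) hdeg fun i hi => by
    rw [← mul_assoc]
    exact hcoeff i hi
  have hM : (2 ^ (τpu + 1) * Real.sqrt ((dpu : ℝ) + 1)) ^ du * B ^ dpu
      = 2 ^ du * (A ^ du * B ^ dpu) := by ring
  have hMpos : 0 < 2 ^ du * (A ^ du * B ^ dpu) :=
    (sum_nonneg fun i _ => abs_nonneg _).trans_lt hupper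
  rw [hM, div_lt_iff₀ hMpos]
  exact hlower.trans_lt (mul_lt_mul_of_pos_left hupper hm)
end

section
/- The family of polynomials P_k(X) = X^d + (2^k X - 1)² (for even degree d ≥ 2 and k ≥ 1) is positive on [0,1], has coefficients of bitsize τ = 2k (up to constants), and its minimum m_k over [0,1] satisfies m_k ≤ P_k(2^{-k}) = 2^{-dk} = 2^{-dτ/2}. Hence the minimum of an integer polynomial positive on [0,1] can decrease exponentially in d·τ. -/
theorem pow_add_sq_mul_sub_one_pos {R : Type*} [CommRing R] [LinearOrder R]
    [IsStrictOrderedRing R] {x : R} (hx : 0 ≤ x) (d : ℕ) (c : R) :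
    0 < x ^ d + (c * x - 1) ^ 2 := by
  rcases hx.eq_or_lt with rfl | hx
  · simp only [mul_zero, zero_sub, neg_one_sq]
    positivity
  · positivity

theorem zpow_neg_pow_add_sq_mul_sub_one {K : Type*} [Field K] {a : K} (ha : a ≠ 0) (d k : ℕ) :
    (a ^ (-(k : ℤ))) ^ d + (a ^ k * a ^ (-(k : ℤ)) - 1) ^ 2 = a ^ (-((d * k : ℕ) : ℤ)) := by
  rw [zpow_neg, zpow_natCast, mul_inv_cancel₀ (pow_ne_zero k ha), zpow_neg, zpow_natCast,
    ← inv_pow, ← pow_mul, mul_comm]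
  ring

theorem min_can_be_exponentially_small_general (d k : ℕ) :
    (∀ x ∈ Set.Icc (0:ℝ) 1, 0 < x ^ d + (2 ^ k * x - 1) ^ 2) ∧
    ((2:ℝ) ^ (-(k:ℤ))) ^ d + (2 ^ k * (2:ℝ) ^ (-(k:ℤ)) - 1) ^ 2
      = (2:ℝ) ^ (-((d * k : ℕ) : ℤ)) ∧
    ∀ m : ℝ, IsLeast ((fun x : ℝ => x ^ d + (2 ^ k * x - 1) ^ 2) '' Set.Icc (0:ℝ) 1) m →
      m ≤ (2:ℝ) ^ (-((d * k : ℕ) : ℤ)) := by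
  have hvalue := zpow_neg_pow_add_sq_mul_sub_one (two_ne_zero (α := ℝ)) d k
  have hmem : (2:ℝ) ^ (-(k:ℤ)) ∈ Set.Icc (0:ℝ) 1 :=
    ⟨by positivity, zpow_le_one_of_nonpos₀ one_le_two (by simp)⟩
  refine ⟨fun x hx => pow_add_sq_mul_sub_one_pos hx.1 d _, hvalue, fun m hm => ?_⟩
  exact hvalue ▸ hm.2 (Set.mem_image_of_mem _ hmem)

theorem min_can_be_exponentially_small (d k : ℕ) (hd : 2 ≤ d) (hde : Even d)
    (hk : 1 ≤ k) :
    (∀ x ∈ Set.Icc (0:ℝ) 1, 0 < x ^ d + (2 ^ k * x - 1) ^ 2) ∧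
    ((2:ℝ) ^ (-(k:ℤ))) ^ d + (2 ^ k * (2:ℝ) ^ (-(k:ℤ)) - 1) ^ 2
      = (2:ℝ) ^ (-((d * k : ℕ) : ℤ)) ∧
    ∀ m : ℝ, IsLeast ((fun x : ℝ => x ^ d + (2 ^ k * x - 1) ^ 2) '' Set.Icc (0:ℝ) 1) m →
      m ≤ (2:ℝ) ^ (-((d * k : ℕ) : ℤ)) :=
  min_can_be_exponentially_small_general d k
end
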